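/- (Budget feasibility of the Successive-Accepts-and-Rejects phase lengths used in MDS.) Let K and n be integers with 2 ≤ K ≤ n. Define loḡ(K) = 1/2 + Σ_{i=2}^{K} 1/i (a positive real number), and for k = 1, …, K−1 define n_k = ⌈(1/loḡ(K)) · (n − K)/(K + 1 − k)⌉. Then n_{K−1} + Σ_{k=1}^{K−1} n_k ≤ n; equivalently, since the total number of arm pulls performed by the algorithm is Σ_{k=1}^{K−1} (K + 1 − k)(n_k − n_{k−1}) with n_0 = 0, the algorithm performs at most n arm pulls in total. -/
import Mathlib


/-- `loḡ(K) = 1/2 + Σ_{i=2}^{K} 1/i`. -/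
noncomputable def logBar (K : ℕ) : ℝ :=
  1 / 2 + ∑ i ∈ Finset.Icc 2 K, (1 : ℝ) / (i : ℝ)

/-- Phase length `n_k = ⌈(1/loḡ(K)) · (n − K)/(K + 1 − k)⌉` of the
Successive-Accepts-and-Rejects scheme used in MDS. -/
noncomputable def phaseLen (K n : ℕ) (k : ℕ) : ℤ :=
  ⌈(1 / logBar K) * (((n : ℝ) - (K : ℝ)) / ((K : ℝ) + 1 - (k : ℝ)))⌉

lemma logBar_pos (K : ℕ) : 0 < logBar K := by
  have h : 0 ≤ ∑ i ∈ Finset.Icc 2 K, (1 : ℝ) / (i : ℝ) :=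
    Finset.sum_nonneg fun i _ => by positivity
  unfold logBar; linarith

lemma reindex (K : ℕ) (hK : 2 ≤ K) :
    ∑ k ∈ Finset.Icc 1 (K - 1), (1 : ℝ) / ((K : ℝ) + 1 - (k : ℝ)) =
      ∑ j ∈ Finset.Icc 2 K, (1 : ℝ) / (j : ℝ) := by
  apply Finset.sum_nbij' (fun k => K + 1 - k) (fun j => K + 1 - j)
  · intro a ha
    simp only [Finset.mem_Icc] at ha ⊢
    omega
  · intro a ha
    simp only [Finset.mem_Icc] at ha ⊢
    omega
  · intro a ha
    simp only [Finset.mem_Icc] at ha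
    omega
  · intro a ha
    simp only [Finset.mem_Icc] at ha
    omega
  · intro a ha
    simp only [Finset.mem_Icc] at ha
    have : ((K + 1 - a : ℕ) : ℝ) = (K : ℝ) + 1 - (a : ℝ) := by
      push_cast [Nat.cast_sub (by omega : a ≤ K + 1)]
      ring
    rw [this]

/-- Budget feasibility of the Successive-Accepts-and-Rejects phase lengths used in MDS:
for `2 ≤ K ≤ n`, the total number of arm pulls `n_{K−1} + Σ_{k=1}^{K−1} n_k` is at most
`n`. -/
theorem mds_budget_feasible (K n : ℕ) (hK : 2 ≤ K) (hKn : K ≤ n) :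
    phaseLen K n (K - 1) + ∑ k ∈ Finset.Icc 1 (K - 1), phaseLen K n k ≤ (n : ℤ) := by
  have hL := logBar_pos K
  set L := logBar K with hLdef
  set x : ℕ → ℝ := fun k => (1 / L) * (((n : ℝ) - (K : ℝ)) / ((K : ℝ) + 1 - (k : ℝ))) with hx
  -- exact value of the real sum
  have hsum : x (K - 1) + ∑ k ∈ Finset.Icc 1 (K - 1), x k = (n : ℝ) - (K : ℝ) := by
    have hcast : ((K - 1 : ℕ) : ℝ) = (K : ℝ) - 1 := by
      push_cast [Nat.cast_sub (by omega : 1 ≤ K)]; ring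
    have h1 : x (K - 1) = (1 / L) * (((n : ℝ) - (K : ℝ)) * (1 / 2)) := by
      simp only [hx, hcast]
      have : (K : ℝ) + 1 - ((K : ℝ) - 1) = 2 := by ring
      rw [this]; ring
    have h2 : ∑ k ∈ Finset.Icc 1 (K - 1), x k =
        (1 / L) * (((n : ℝ) - (K : ℝ)) * ∑ j ∈ Finset.Icc 2 K, (1 : ℝ) / (j : ℝ)) := by
      rw [← reindex K hK, Finset.mul_sum, Finset.mul_sum]
      apply Finset.sum_congr rfl
      intro k hk
      simp only [hx]
      ring
    rw [h1, h2, ← mul_add, ← mul_add]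
    have : (1 : ℝ) / 2 + ∑ j ∈ Finset.Icc 2 K, (1 : ℝ) / (j : ℝ) = L := rfl
    rw [this]
    field_simp
  -- strict bound from ceilings
  have hceil : ∀ k, ((phaseLen K n k : ℤ) : ℝ) < x k + 1 := by
    intro k
    exact Int.ceil_lt_add_one _
  have hcard : (Finset.Icc 1 (K - 1)).card = K - 1 := by
    rw [Nat.card_Icc]; omega
  have hlt : ((phaseLen K n (K - 1) + ∑ k ∈ Finset.Icc 1 (K - 1), phaseLen K n k : ℤ) : ℝ)
      < (n : ℝ) := by
    push_cast
    have hsumlt : ∑ k ∈ Finset.Icc 1 (K - 1), ((phaseLen K n k : ℤ) : ℝ)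
        ≤ ∑ k ∈ Finset.Icc 1 (K - 1), (x k + 1) := by
      apply Finset.sum_le_sum
      intro k _
      exact le_of_lt (hceil k)
    have : ∑ k ∈ Finset.Icc 1 (K - 1), (x k + 1)
        = (∑ k ∈ Finset.Icc 1 (K - 1), x k) + ((K : ℝ) - 1) := by
      rw [Finset.sum_add_distrib, Finset.sum_const, hcard, nsmul_eq_mul, mul_one,
        Nat.cast_sub (by omega : 1 ≤ K), Nat.cast_one]
    have h1 := hceil (K - 1)
    rw [this] at hsumlt
    have : (K : ℝ) ≥ 2 := by exact_mod_cast hK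
    nlinarith [hsumlt, h1, hsum]
  have : (phaseLen K n (K - 1) + ∑ k ∈ Finset.Icc 1 (K - 1), phaseLen K n k) < (n : ℤ) := by
    exact_mod_cast hlt
  omega
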